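/- arXiv:1208.3221 — 3 statements merged into one kernel-verified Lean document; each statement's English description precedes it below -/
import Mathlib

section
/- If an Ã-lattice M̃ is projective as an Ã-module, then M̃ is tight, i.e. Fⁿ·M̃ = rad̃ⁿM̃ for all n ≥ 0. -/
set_option linter.unusedSectionVars false
set_option maxHeartbeats 1000000

/-!
Context: `O` is a DVR with fraction field `K`.  `A` plays the role of `Ã` (an `O`-algebra,
finite and free as an `O`-module), `B` plays the role of `Ã_K = K ⊗_O Ã`: it is a
finite-dimensional `K`-algebra together with an injective `O`-algebra map `f : A → B`
whose image spans `B` over `K`.  An `Ã`-lattice is an `A`-module `M` that is finite and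
free over `O`; `V` plays the role of `M̃_K = K ⊗_O M̃`: a `B`-module together with an
injective `O`-linear map `ι : M → V`, compatible with the actions, whose image spans `V`
over `K`.  `J` is the Jacobson radical of `B`, `rad̃ⁿ M̃ := M̃ ∩ Jⁿ·M̃_K` and
`Fⁿ := Ã ∩ Jⁿ`.

STATEMENT: if the `Ã`-lattice `M̃` is projective as an `Ã`-module, then `M̃` is tight,
i.e. `Fⁿ·M̃ = rad̃ⁿM̃` for all `n ≥ 0`.
-/

open Submodule

section

variable (O : Type) [CommRing O] [IsDomain O] [IsDiscreteValuationRing O]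
variable (K : Type) [Field K] [Algebra O K] [IsFractionRing O K]
variable (B : Type) [Ring B] [Algebra K B] [Algebra O B] [IsScalarTower O K B]
  [FiniteDimensional K B]
variable (V : Type) [AddCommGroup V] [Module K V] [Module B V] [IsScalarTower K B V]
  [Module O V] [IsScalarTower O K V] [FiniteDimensional K V]

/-- The `R`-span of the set of products `s • w`, `s ∈ S`, `w ∈ W`. -/
noncomputable def sspan (R : Type) {B' V' : Type} [Semiring R] [AddCommMonoid V'] [Module R V']
    [SMul B' V'] (S : Set B') (W : Set V') : Submodule R V' :=
  Submodule.span R {y : V' | ∃ s ∈ S, ∃ w ∈ W, y = s • w}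

/-- The Jacobson radical `J` of `B = Ã_K`, viewed as a `K`-submodule of `B`. -/
noncomputable def JK : Submodule K B :=
  Submodule.restrictScalars K (Ideal.jacobson (⊥ : Ideal B))

/-- `Jⁿ·M̃_K`, i.e. `Jⁿ·V`. -/
noncomputable def radV (n : ℕ) : Submodule K V :=
  sspan K ((JK K B ^ n : Submodule K B) : Set B) (Set.univ : Set V)

lemma aux_alg_ne (s : nonZeroDivisors O) : (algebraMap O K s : K) ≠ 0 := by
  intro h
  exact nonZeroDivisors.coe_ne_zero s (IsFractionRing.injective O K (by simpa using h))

lemma aux_map_units (W : Type) [AddCommGroup W] [Module K W] [Module O W]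
    [IsScalarTower O K W] (s : nonZeroDivisors O) :
    IsUnit (algebraMap O (Module.End O W) s) := by
  rw [Module.End.isUnit_iff]
  have hc := aux_alg_ne O K s
  constructor
  · intro x y hxy
    simp only [Module.algebraMap_end_apply] at hxy
    have h2 : (algebraMap O K s) • x = (algebraMap O K s) • y := by
      rw [algebraMap_smul, algebraMap_smul]; exact hxy
    exact smul_right_injective W hc h2
  · intro y
    refine ⟨(algebraMap O K s)⁻¹ • y, ?_⟩
    simp only [Module.algebraMap_end_apply]
    rw [← algebraMap_smul K (s : O), smul_smul, mul_inv_cancel₀ hc, one_smul]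

lemma aux_isLoc (P W : Type) [AddCommGroup P] [Module O P]
    [AddCommGroup W] [Module K W] [Module O W] [IsScalarTower O K W]
    (φ : P →ₗ[O] W) (hinj : Function.Injective φ)
    (hspan : Submodule.span K (Set.range φ) = ⊤) :
    IsLocalizedModule (nonZeroDivisors O) φ := by
  constructor
  · exact fun s => aux_map_units O K W s
  · intro w
    have hw : w ∈ Submodule.span K (Set.range φ) := hspan ▸ Submodule.mem_top
    induction hw using Submodule.span_induction with
    | mem x hx =>
        obtain ⟨p, rfl⟩ := hx; exact ⟨(p, 1), by simp⟩
    | zero => exact ⟨(0, 1), by simp⟩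
    | add x y hx hy ihx ihy =>
        obtain ⟨⟨p, s⟩, hp⟩ := ihx
        obtain ⟨⟨q, t⟩, hq⟩ := ihy
        refine ⟨((t : O) • p + (s : O) • q, s * t), ?_⟩
        have hp' : (s : O) • x = φ p := hp
        have hq' : (t : O) • y = φ q := hq
        show ((s * t : nonZeroDivisors O) : O) • (x + y) = φ _
        push_cast
        rw [map_add, map_smul, map_smul, ← hp', ← hq', smul_add, smul_smul, smul_smul]
        congr 1
        rw [mul_comm]
    | smul c x hx ih =>
        obtain ⟨⟨p, s⟩, hp⟩ := ih
        obtain ⟨⟨r, t⟩, hrt⟩ := IsLocalization.mk'_surjective (nonZeroDivisors O) c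
        have hp' : (s : O) • x = φ p := hp
        refine ⟨(r • p, t * s), ?_⟩
        show ((t * s : nonZeroDivisors O) : O) • (c • x) = φ (r • p)
        have key : algebraMap O K t * c = algebraMap O K r := by
          rw [← hrt, mul_comm]; exact IsLocalization.mk'_spec K r t
        push_cast
        rw [map_smul, ← hp', mul_comm (t : O) (s : O), mul_smul]
        rw [← algebraMap_smul K (t : O) (c • x), smul_smul, key, algebraMap_smul,
          smul_comm (r : O) (s : O) x, smul_smul]
  · intro p q h
    exact ⟨1, by simpa using hinj h⟩

lemma aux_Klin (W₁ W₂ : Type) [AddCommGroup W₁] [Module K W₁] [Module O W₁]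
    [IsScalarTower O K W₁] [AddCommGroup W₂] [Module K W₂] [Module O W₂]
    [IsScalarTower O K W₂] (G : W₁ →ₗ[O] W₂) (c : K) (v : W₁) :
    G (c • v) = c • G v := by
  obtain ⟨⟨r, s⟩, hrs⟩ := IsLocalization.mk'_surjective (nonZeroDivisors O) c
  have key : algebraMap O K s * c = algebraMap O K r := by
    rw [← hrs, mul_comm]; exact IsLocalization.mk'_spec K r s
  apply smul_right_injective W₂ (aux_alg_ne O K s)
  show algebraMap O K s • G (c • v) = algebraMap O K s • (c • G v)
  rw [smul_smul, key, algebraMap_smul, algebraMap_smul, ← map_smul]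
  rw [← algebraMap_smul K (s : O) (c • v), smul_smul, key, algebraMap_smul, map_smul]

lemma jac_mul_right {x : B} (hx : x ∈ Ideal.jacobson (⊥ : Ideal B)) (b : B) :
    x * b ∈ Ideal.jacobson (⊥ : Ideal B) :=
  Ideal.mul_mem_right b _ hx

lemma JKpow_mul_right : ∀ n : ℕ, ∀ x ∈ (JK K B ^ (n + 1) : Submodule K B), ∀ b : B,
    x * b ∈ (JK K B ^ (n + 1) : Submodule K B) := by
  intro n
  induction n with
  | zero =>
      intro x hx b
      rw [pow_one] at hx ⊢
      exact jac_mul_right B hx b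
  | succ n ih =>
      intro x hx b
      rw [pow_succ] at hx ⊢
      refine Submodule.mul_induction_on hx ?_ ?_
      · intro m hm j hj
        rw [mul_assoc]
        exact Submodule.mul_mem_mul hm (jac_mul_right B hj b)
      · intro u v hu hv
        rw [add_mul]
        exact add_mem hu hv

lemma aux_blin (A : Type) [Ring A] [Algebra O A]
    (f : A →ₐ[O] B) (hfspan : Submodule.span K (Set.range f) = ⊤)
    (M : Type) [AddCommGroup M] [Module O M] [Module A M] [IsScalarTower O A M]
    (ι : M →ₗ[O] V) (hιspan : Submodule.span K (Set.range ι) = ⊤)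
    (G : V →ₗ[O] B)
    (hcomm : ∀ (a : A) (m : M), G (f a • ι m) = f a * G (ι m)) :
    ∀ (b : B) (v : V), G (b • v) = b * G v := by
  have hK : ∀ (c : K) (w : V), G (c • w) = c • G w := fun c w => aux_Klin O K V B G c w
  intro b v
  have hb : b ∈ Submodule.span K (Set.range f) := hfspan ▸ Submodule.mem_top
  induction hb using Submodule.span_induction with
  | mem x hx =>
      obtain ⟨a, rfl⟩ := hx
      have hv : v ∈ Submodule.span K (Set.range ι) := hιspan ▸ Submodule.mem_top
      induction hv using Submodule.span_induction with
      | mem y hy => obtain ⟨m, rfl⟩ := hy; exact hcomm a m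
      | zero => simp
      | add y z _ _ ihy ihz => rw [smul_add, map_add, ihy, ihz, map_add, mul_add]
      | smul c y _ ih =>
          have h1 : (f a : B) • (c • y) = c • ((f a : B) • y) := by
            rw [← algebraMap_smul B c y, ← mul_smul, ← Algebra.commutes, mul_smul,
              algebraMap_smul]
          rw [h1, hK, ih, hK, mul_smul_comm]
  | zero => simp
  | add x y _ _ ihx ihy => rw [add_smul, map_add, ihx, ihy, add_mul]
  | smul c x _ ih => rw [smul_assoc, hK, ih, smul_mul_assoc]

lemma aux_G_rad (G : V →ₗ[O] B) (hGb : ∀ (b : B) (v : V), G (b • v) = b * G v)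
    (n : ℕ) : ∀ v ∈ radV K B V (n + 1), G v ∈ (JK K B ^ (n + 1) : Submodule K B) := by
  intro v hv
  have hK : ∀ (c : K) (w : V), G (c • w) = c • G w := fun c w => aux_Klin O K V B G c w
  rw [radV, sspan] at hv
  induction hv using Submodule.span_induction with
  | mem y hy =>
      obtain ⟨s, hs, w, -, rfl⟩ := hy
      rw [hGb]
      exact JKpow_mul_right K B n s hs (G w)
  | zero => simp
  | add x y _ _ ihx ihy => rw [map_add]; exact add_mem ihx ihy
  | smul c x _ ih => rw [hK]; exact Submodule.smul_mem _ c ih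

theorem statement1
    (A : Type) [Ring A] [Algebra O A] [Module.Finite O A] [Module.Free O A]
    (f : A →ₐ[O] B) (hf : Function.Injective f)
    (hfspan : Submodule.span K (Set.range f) = ⊤)
    (M : Type) [AddCommGroup M] [Module O M] [Module A M] [IsScalarTower O A M]
    [Module.Finite O M] [Module.Free O M]
    (ι : M →ₗ[O] V) (hι : Function.Injective ι)
    (hιspan : Submodule.span K (Set.range ι) = ⊤)
    (hcompat : ∀ (a : A) (m : M), ι (a • m) = f a • ι m)
    (hproj : Module.Projective A M) :
    ∀ n : ℕ,
      sspan O
          (((LinearMap.range f.toLinearMap ⊓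
              Submodule.restrictScalars O (JK K B ^ n) : Submodule O B)) : Set B)
          ((LinearMap.range ι : Submodule O V) : Set V) =
        LinearMap.range ι ⊓ Submodule.restrictScalars O (radV K B V n) := by
  intro n
  have hfspan' : Submodule.span K (Set.range f.toLinearMap) = ⊤ := by
    rw [show Set.range ⇑f.toLinearMap = Set.range ⇑f from rfl]; exact hfspan
  haveI locι : IsLocalizedModule (nonZeroDivisors O) ι := aux_isLoc O K M V ι hι hιspan
  apply le_antisymm
  · -- easy inclusion
    rw [sspan]
    apply Submodule.span_le.mpr
    rintro y ⟨s, hs, w, hw, rfl⟩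
    obtain ⟨hs1, hs2⟩ := hs
    obtain ⟨a, rfl⟩ := hs1
    obtain ⟨m, rfl⟩ := hw
    refine ⟨⟨a • m, ?_⟩, ?_⟩
    · show ι (a • m) = f.toLinearMap a • ι m
      exact hcompat a m
    · show f.toLinearMap a • ι m ∈ radV K B V n
      rw [radV, sspan]
      exact Submodule.subset_span ⟨f a, hs2, ι m, trivial, rfl⟩
  · rintro v ⟨⟨m, rfl⟩, hv⟩
    show ι m ∈ sspan O _ _
    cases n with
    | zero =>
        rw [sspan]
        apply Submodule.subset_span
        refine ⟨1, ⟨⟨1, by simp⟩, ?_⟩, ι m, ⟨m, rfl⟩, (one_smul B (ι m)).symm⟩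
        show (1 : B) ∈ (JK K B ^ 0 : Submodule K B)
        rw [pow_zero, Submodule.one_eq_span]
        exact Submodule.subset_span rfl
    | succ n =>
        obtain ⟨σ, hσ⟩ := hproj.out
        -- coordinate functions
        set S := nonZeroDivisors O
        have hu : ∀ s : S, IsUnit (algebraMap O (Module.End O B) s) :=
          fun s => aux_map_units O K B s
        have key : ∀ i : M, f ((σ m) i) ∈ Submodule.restrictScalars O (JK K B ^ (n + 1)) := by
          intro i
          set g : M →ₗ[A] A := (Finsupp.lapply i).comp σ with hg
          set G : V →ₗ[O] B :=
            IsLocalizedModule.lift S ι (f.toLinearMap.comp (g.restrictScalars O)) hu with hG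
          have hGι : ∀ m' : M, G (ι m') = f (g m') := fun m' =>
            IsLocalizedModule.lift_apply S ι (f.toLinearMap.comp (g.restrictScalars O)) hu m'
          have hcomm : ∀ (a : A) (m' : M), G (f a • ι m') = f a * G (ι m') := by
            intro a m'
            rw [← hcompat, hGι, hGι]
            have : g (a • m') = a * g m' := by rw [map_smul, smul_eq_mul]
            rw [this, map_mul]
          have hGb := aux_blin O K B V A f hfspan M ι hιspan G hcomm
          have := aux_G_rad O K B V G hGb n (ι m) hv
          rw [hGι] at this
          exact this
        -- decompose m
        have hm : ι m = ((σ m).support).sum (fun i => f ((σ m) i) • ι i) := by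
          conv_lhs => rw [← hσ m]
          rw [Finsupp.linearCombination_apply, Finsupp.sum, map_sum]
          exact Finset.sum_congr rfl fun i _ => by rw [hcompat]; rfl
        rw [hm, sspan]
        apply Submodule.sum_mem
        intro i _
        apply Submodule.subset_span
        exact ⟨f ((σ m) i), ⟨⟨(σ m) i, rfl⟩, key i⟩, ι i, ⟨i, rfl⟩, rfl⟩

end
end

section
/- Let M̃ be an Ã-lattice. For each n ≥ 0 the inclusion Fⁿ·M̃ ⊆ rad̃ⁿM̃ induces a natural O-module map Fⁿ·M̃/Fⁿ⁺¹·M̃ → rad̃ⁿM̃/rad̃ⁿ⁺¹M̃. Then M̃ is tight (i.e. Fⁿ·M̃ = rad̃ⁿM̃ for all n ≥ 0) if and only if all of these induced maps are surjective; moreover, if they are all surjective then each of them is an isomorphism. -/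
set_option linter.unusedSectionVars false

/-!
Context: `O` is a DVR with uniformizer `π`, fraction field `K`.  `B` plays the role of
`Ã_K = K ⊗_O Ã` (finite-dimensional `K`-algebra), `A ⊆ B` the `O`-order playing the role
of `Ã`, `V` the role of `M̃_K`, and the lattice `M̃` is an `A`-stable `O`-submodule
`L ⊆ V`, finite and free over `O`, spanning `V` over `K`.  `J` is the Jacobson radical of
`B`, `rad̃ⁿ M̃ := M̃ ∩ Jⁿ·M̃_K`, `Fⁿ := Ã ∩ Jⁿ`, and `M̃` is *tight* if
`Fⁿ·M̃ = rad̃ⁿ M̃` for all `n`.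

STATEMENT: the inclusions `Fⁿ·M̃ ⊆ rad̃ⁿ M̃` induce natural maps
`Fⁿ·M̃/Fⁿ⁺¹·M̃ → rad̃ⁿM̃/rad̃ⁿ⁺¹M̃`; `M̃` is tight iff all these maps are surjective, and if
they are all surjective then each is an isomorphism (bijective).
-/

open Submodule

section

variable (O : Type) [CommRing O] [IsDomain O] [IsDiscreteValuationRing O]
variable (K : Type) [Field K] [Algebra O K] [IsFractionRing O K]
variable (B : Type) [Ring B] [Algebra K B] [Algebra O B] [IsScalarTower O K B]
  [FiniteDimensional K B]
variable (V : Type) [AddCommGroup V] [Module K V] [Module B V] [IsScalarTower K B V]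
  [Module O V] [IsScalarTower O K V] [FiniteDimensional K V]

/-- `rad̃ⁿ M̃ := M̃ ∩ Jⁿ·M̃_K`, an `O`-submodule of `V`. -/
noncomputable def radL (L : Submodule O V) (n : ℕ) : Submodule O V :=
  L ⊓ Submodule.restrictScalars O (radV K B V n)

/-- `Fⁿ := Ã ∩ Jⁿ`, an `O`-submodule of `B`. -/
noncomputable def Fn (A : Subalgebra O B) (n : ℕ) : Submodule O B :=
  A.toSubmodule ⊓ Submodule.restrictScalars O (JK K B ^ n)

/-- `Fⁿ·M̃`, an `O`-submodule of `V`. -/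
noncomputable def FnL (A : Subalgebra O B) (L : Submodule O V) (n : ℕ) : Submodule O V :=
  sspan O ((Fn O K B A n : Submodule O B) : Set B) ((L : Submodule O V) : Set V)

theorem FnL_le_radL (A : Subalgebra O B) (L : Submodule O V)
    (hLstab : ∀ a ∈ A, ∀ x ∈ L, a • x ∈ L) (n : ℕ) :
    FnL O K B V A L n ≤ radL O K B V L n := by
  apply Submodule.span_le.mpr
  rintro y ⟨a, ha, x, hx, rfl⟩
  obtain ⟨ha1, ha2⟩ := Submodule.mem_inf.mp ha
  exact ⟨hLstab a ha1 x hx, Submodule.subset_span ⟨a, ha2, x, trivial, rfl⟩⟩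

/-- The natural map `Fⁿ·M̃/Fⁿ⁺¹·M̃ → rad̃ⁿM̃/rad̃ⁿ⁺¹M̃` induced by the inclusion
`Fⁿ·M̃ ⊆ rad̃ⁿM̃`. -/
noncomputable def indMap (A : Subalgebra O B) (L : Submodule O V)
    (hLstab : ∀ a ∈ A, ∀ x ∈ L, a • x ∈ L) (n : ℕ) :
    (↥(FnL O K B V A L n) ⧸
        (Submodule.comap (FnL O K B V A L n).subtype (FnL O K B V A L (n + 1)))) →ₗ[O]
      (↥(radL O K B V L n) ⧸
        (Submodule.comap (radL O K B V L n).subtype (radL O K B V L (n + 1)))) :=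
  Submodule.mapQ _ _ (Submodule.inclusion (FnL_le_radL O K B V A L hLstab n)) (by
    intro x hx
    have : (x : V) ∈ radL O K B V L (n + 1) :=
      FnL_le_radL O K B V A L hLstab (n + 1) hx
    simpa using this)

/-! ### Auxiliary lemmas -/

lemma jk_left_mul {b x : B} (hx : x ∈ JK K B) : b * x ∈ JK K B :=
  Ideal.mul_mem_left _ b hx

lemma jk_pow_succ_le (n : ℕ) : (JK K B) ^ (n + 2) ≤ (JK K B) ^ (n + 1) := by
  induction n with
  | zero =>
    rw [pow_succ, pow_one]
    exact Submodule.mul_le.mpr fun x hx y hy => jk_left_mul K B hy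
  | succ k ih =>
    calc (JK K B) ^ (k + 3) = (JK K B) ^ (k + 2) * JK K B := pow_succ _ _
      _ ≤ (JK K B) ^ (k + 1) * JK K B := mul_le_mul' ih le_rfl
      _ = (JK K B) ^ (k + 2) := (pow_succ _ _).symm

lemma jk_pow_add_le (n d : ℕ) : (JK K B) ^ (n + 1 + d) ≤ (JK K B) ^ (n + 1) := by
  induction d with
  | zero => exact le_rfl
  | succ k ih =>
    have h2 : (JK K B) ^ (n + 1 + (k + 1)) ≤ (JK K B) ^ (n + 1 + k) := by
      rw [show n + 1 + (k + 1) = (n + k) + 2 by omega, show n + 1 + k = (n + k) + 1 by omega]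
      exact jk_pow_succ_le K B (n + k)
    exact h2.trans ih

/-- The submodule of sums `Σ_{w ∈ s} j_w * w` with `j_w ∈ J`. -/
noncomputable def Smod (s : Finset B) : Submodule K B :=
  s.sup fun w => (JK K B).map (LinearMap.mulRight K w)

lemma Smod_left_stable (s : Finset B) {b x : B} (hx : x ∈ Smod K B s) :
    b * x ∈ Smod K B s := by
  revert x
  suffices h : Smod K B s ≤ Submodule.comap (LinearMap.mulLeft K b) (Smod K B s) by
    intro x hx
    exact h hx
  apply Finset.sup_le
  intro w hw
  rintro y ⟨j, hj, rfl⟩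
  simp only [Submodule.mem_comap, LinearMap.mulLeft_apply, LinearMap.mulRight_apply]
  rw [← mul_assoc]
  exact (Finset.le_sup (f := fun w => (JK K B).map (LinearMap.mulRight K w)) hw)
    (Submodule.mem_map_of_mem (jk_left_mul K B hj))

lemma nak (s : Finset B) : (∀ w ∈ s, w ∈ Smod K B s) → ∀ w ∈ s, w = 0 := by
  classical
  induction s using Finset.strongInduction with
  | _ s ih =>
    intro hs
    rcases s.eq_empty_or_nonempty with rfl | ⟨a, ha⟩
    · intro w hw
      simp at hw
    · obtain ⟨t, hat, rfl⟩ : ∃ t, a ∉ t ∧ insert a t = s :=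
        ⟨s.erase a, Finset.notMem_erase a s, Finset.insert_erase ha⟩
      have key : Smod K B (insert a t)
          = (JK K B).map (LinearMap.mulRight K a) ⊔ Smod K B t := Finset.sup_insert
      have hmem : a ∈ Smod K B (insert a t) := hs a (Finset.mem_insert_self a t)
      rw [key] at hmem
      obtain ⟨y, hy, z, hz, hyz⟩ := Submodule.mem_sup.mp hmem
      obtain ⟨j, hj, rfl⟩ := hy
      have hj' : j ∈ Ideal.jacobson (⊥ : Ideal B) := hj
      obtain ⟨u, hu⟩ := Ideal.mem_jacobson_iff.mp hj' (-1)
      have h0 : u * (-1) * j + u - 1 = 0 := Ideal.mem_bot.mp hu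
      have hu' : u - u * j = 1 := by
        have h1 : u - u * j = (u * (-1) * j + u - 1) + 1 := by noncomm_ring
        rw [h1, h0, zero_add]
      have hz' : z = a - j * a := by
        simp only [LinearMap.mulRight_apply] at hyz
        rw [eq_sub_iff_add_eq, add_comm]
        exact hyz
      have ha' : a = u * z := by
        calc a = (u - u * j) * a := by rw [hu', one_mul]
          _ = u * (a - j * a) := by noncomm_ring
          _ = u * z := by rw [← hz']
      have hle : Smod K B (insert a t) ≤ Smod K B t := by
        rw [key]
        apply sup_le
        · rintro y ⟨j', hj2, rfl⟩
          simp only [LinearMap.mulRight_apply]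
          rw [ha', ← mul_assoc]
          exact Smod_left_stable K B t hz
        · exact le_rfl
      have ht : ∀ w ∈ t, w = 0 :=
        ih t (Finset.ssubset_insert hat)
          (fun w hw => hle (hs w (Finset.mem_insert_of_mem hw)))
      have htbot : Smod K B t ≤ ⊥ := by
        apply Finset.sup_le
        intro w hw
        rintro y ⟨j', _, rfl⟩
        simp [LinearMap.mulRight_apply, ht w hw]
      have hz0 : z = 0 := (Submodule.mem_bot K).mp (htbot hz)
      have ha0 : a = 0 := by rw [ha', hz0, mul_zero]
      intro w hw
      rcases Finset.mem_insert.mp hw with rfl | hw'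
      · exact ha0
      · exact ht w hw'

lemma jk_nilpotent : ∃ m, 1 ≤ m ∧ (JK K B) ^ m = ⊥ := by
  obtain ⟨n, hn⟩ := IsArtinian.monotone_stabilizes (R := K) (M := B)
    ⟨fun k => OrderDual.toDual ((JK K B) ^ (k + 1)), fun k l hkl => by
      obtain ⟨d, rfl⟩ := Nat.exists_eq_add_of_le hkl
      have := jk_pow_add_le K B k d
      rwa [show k + 1 + d = k + d + 1 by omega] at this⟩
  have heq : (JK K B) ^ (n + 1) = (JK K B) ^ (n + 2) := hn (n + 1) (Nat.le_succ n)
  obtain ⟨s, hs⟩ := IsNoetherian.noetherian ((JK K B) ^ (n + 1))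
  have hsub : (JK K B) * Submodule.span K (s : Set B) ≤ Smod K B s := by
    apply Submodule.mul_le.mpr
    intro j hj y hy
    induction hy using Submodule.span_induction with
    | mem w hw =>
      exact (Finset.le_sup (f := fun w => (JK K B).map (LinearMap.mulRight K w)) hw)
        (Submodule.mem_map_of_mem hj)
    | zero => simp
    | add y z hy hz hjy hjz => rw [mul_add]; exact add_mem hjy hjz
    | smul c y hy hjy => rw [mul_smul_comm]; exact Submodule.smul_mem _ c hjy
  have hw0 : ∀ w ∈ s, w = 0 := by
    apply nak K B s
    intro w hw
    have h1 : w ∈ (JK K B) ^ (n + 1) := hs ▸ Submodule.subset_span hw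
    rw [heq, pow_succ', ← hs] at h1
    exact hsub h1
  refine ⟨n + 1, Nat.succ_le_succ (Nat.zero_le n), ?_⟩
  rw [← hs]
  exact Submodule.span_eq_bot.mpr hw0

lemma radV_eq_bot {n : ℕ} (hm : (JK K B) ^ n = ⊥) : radV K B V n = ⊥ := by
  rw [eq_bot_iff]
  apply Submodule.span_le.mpr
  rintro y ⟨sb, hsb, w, -, rfl⟩
  rw [hm] at hsb
  have : sb = 0 := (Submodule.mem_bot K).mp hsb
  simp [this]

lemma radL_eq_bot (L : Submodule O V) {n : ℕ} (hm : (JK K B) ^ n = ⊥) :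
    radL O K B V L n = ⊥ := by
  rw [radL, radV_eq_bot K B V hm]
  simp

lemma radL_zero_eq (L : Submodule O V) : radL O K B V L 0 = L := by
  refine le_antisymm inf_le_left (le_inf le_rfl ?_)
  intro x hx
  refine Submodule.subset_span ⟨1, ?_, x, trivial, (one_smul B x).symm⟩
  rw [pow_zero]
  exact Submodule.one_le.mp le_rfl

lemma FnL_zero_eq (A : Subalgebra O B) (L : Submodule O V)
    (hLstab : ∀ a ∈ A, ∀ x ∈ L, a • x ∈ L) : FnL O K B V A L 0 = L := by
  refine le_antisymm ((FnL_le_radL O K B V A L hLstab 0).trans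
    (radL_zero_eq O K B V L).le) ?_
  intro x hx
  refine Submodule.subset_span ⟨1, Submodule.mem_inf.mpr ⟨A.one_mem, ?_⟩, x, hx,
    (one_smul B x).symm⟩
  rw [Submodule.restrictScalars_mem, pow_zero]
  exact Submodule.one_le.mp le_rfl

lemma FnL_mono (A : Subalgebra O B) (L : Submodule O V) (n : ℕ) :
    FnL O K B V A L (n + 2) ≤ FnL O K B V A L (n + 1) := by
  apply Submodule.span_mono
  rintro y ⟨a, ha, x, hx, rfl⟩
  obtain ⟨ha1, ha2⟩ := Submodule.mem_inf.mp ha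
  exact ⟨a, Submodule.mem_inf.mpr ⟨ha1, jk_pow_succ_le K B n ha2⟩, x, hx, rfl⟩

lemma surj_of_eq (A : Subalgebra O B) (L : Submodule O V)
    (hLstab : ∀ a ∈ A, ∀ x ∈ L, a • x ∈ L) (n : ℕ)
    (heq : FnL O K B V A L n = radL O K B V L n) :
    Function.Surjective (indMap O K B V A L hLstab n) := by
  intro c
  obtain ⟨⟨y, hy⟩, rfl⟩ := Submodule.Quotient.mk_surjective _ c
  have hy' : y ∈ FnL O K B V A L n := heq ▸ hy
  refine ⟨Submodule.Quotient.mk ⟨y, hy'⟩, ?_⟩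
  rw [indMap, Submodule.mapQ_apply]
  rfl

lemma le_of_surj (A : Subalgebra O B) (L : Submodule O V)
    (hLstab : ∀ a ∈ A, ∀ x ∈ L, a • x ∈ L) (n : ℕ)
    (hsurj : Function.Surjective (indMap O K B V A L hLstab n)) :
    radL O K B V L n ≤ FnL O K B V A L n ⊔ radL O K B V L (n + 1) := by
  intro y hy
  obtain ⟨d, hd⟩ := hsurj (Submodule.Quotient.mk ⟨y, hy⟩)
  obtain ⟨x, rfl⟩ := Submodule.Quotient.mk_surjective _ d
  rw [indMap, Submodule.mapQ_apply] at hd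
  have hsub : (x : V) - y ∈ radL O K B V L (n + 1) := by
    have := (Submodule.Quotient.eq _).mp hd
    simpa using this
  exact Submodule.mem_sup.mpr ⟨(x : V), x.2, -((x : V) - y), neg_mem hsub, by abel⟩

lemma inj_of_eq (A : Subalgebra O B) (L : Submodule O V)
    (hLstab : ∀ a ∈ A, ∀ x ∈ L, a • x ∈ L) (n : ℕ)
    (heq : FnL O K B V A L (n + 1) = radL O K B V L (n + 1)) :
    Function.Injective (indMap O K B V A L hLstab n) := by
  intro c d hcd
  obtain ⟨x, rfl⟩ := Submodule.Quotient.mk_surjective _ c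
  obtain ⟨z, rfl⟩ := Submodule.Quotient.mk_surjective _ d
  rw [indMap, Submodule.mapQ_apply, Submodule.mapQ_apply] at hcd
  have hsub : (x : V) - (z : V) ∈ radL O K B V L (n + 1) := by
    have := (Submodule.Quotient.eq _).mp hcd
    simpa using this
  rw [← heq] at hsub
  exact (Submodule.Quotient.eq _).mpr (by simpa using hsub)

lemma eq_of_surj (A : Subalgebra O B) (L : Submodule O V)
    (hLstab : ∀ a ∈ A, ∀ x ∈ L, a • x ∈ L)
    (hsurj : ∀ n : ℕ, Function.Surjective (indMap O K B V A L hLstab n)) :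
    ∀ n : ℕ, FnL O K B V A L n = radL O K B V L n := by
  obtain ⟨m, hm1, hm⟩ := jk_nilpotent K B
  have key : ∀ k n : ℕ, m ≤ n + k → FnL O K B V A L n = radL O K B V L n := by
    intro k
    induction k with
    | zero =>
      intro n hn
      have hbot : (JK K B) ^ n = ⊥ := by
        have : (JK K B) ^ n = (JK K B) ^ m * (JK K B) ^ (n - m) := by
          rw [← pow_add, Nat.add_sub_cancel' (by omega : m ≤ n)]
        rw [this, hm, bot_mul]
      have hr : radL O K B V L n = ⊥ := radL_eq_bot O K B V L hbot
      exact le_antisymm (FnL_le_radL O K B V A L hLstab n) (hr ▸ bot_le)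
    | succ k ih =>
      intro n hn
      match n with
      | 0 => rw [FnL_zero_eq O K B V A L hLstab, radL_zero_eq O K B V L]
      | (j + 1) =>
        have hnext : FnL O K B V A L (j + 2) = radL O K B V L (j + 2) :=
          ih (j + 2) (by omega)
        refine le_antisymm (FnL_le_radL O K B V A L hLstab _) ?_
        have hle := le_of_surj O K B V A L hLstab (j + 1) (hsurj (j + 1))
        refine hle.trans (sup_le le_rfl ?_)
        rw [← hnext]
        exact FnL_mono O K B V A L j
  intro n
  exact key m n (by omega)

theorem statement2 (π : O) (hπ : Irreducible π)
    (A : Subalgebra O B) (hAfin : Module.Finite O A) (hAfree : Module.Free O A)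
    (hAspan : Submodule.span K (A : Set B) = ⊤)
    (L : Submodule O V) (hLfin : Module.Finite O L) (hLfree : Module.Free O L)
    (hLspan : Submodule.span K (L : Set V) = ⊤)
    (hLstab : ∀ a ∈ A, ∀ x ∈ L, a • x ∈ L) :
    ((∀ n : ℕ, FnL O K B V A L n = radL O K B V L n) ↔
        (∀ n : ℕ, Function.Surjective (indMap O K B V A L hLstab n))) ∧
    ((∀ n : ℕ, Function.Surjective (indMap O K B V A L hLstab n)) →
        ∀ n : ℕ, Function.Bijective (indMap O K B V A L hLstab n)) := by
  refine ⟨⟨fun heq n => surj_of_eq O K B V A L hLstab n (heq n),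
    fun hsurj => eq_of_surj O K B V A L hLstab hsurj⟩, fun hsurj n => ?_⟩
  have heq := eq_of_surj O K B V A L hLstab hsurj
  exact ⟨inj_of_eq O K B V A L hLstab n (heq (n + 1)),
    surj_of_eq O K B V A L hLstab n (heq n)⟩

end
end

section
/- Assume that J_ã·Ã_K = J = Ã_K·J_ã and that Ã is tight as an ã-lattice, i.e. (ã ∩ J_ãⁿ)·Ã = Ã ∩ Jⁿ for all n ≥ 0. Then for every Ã-lattice M̃ and every n ≥ 0 one has M̃ ∩ J_ãⁿ·M̃_K = M̃ ∩ Jⁿ·M̃_K and (ã ∩ J_ãⁿ)·M̃ = (Ã ∩ Jⁿ)·M̃; consequently M̃ is tight as an ã-lattice if and only if it is tight as an Ã-lattice. -/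
set_option linter.unusedSectionVars false

/-!
Context: `O` is a DVR with fraction field `K`.  `B` plays the role of `Ã_K = K ⊗_O Ã`
(finite-dimensional `K`-algebra), `A ⊆ B` the `O`-order playing the role of `Ã`,
`A' ⊆ A` an `O`-subalgebra playing the role of `ã`, and `C ⊆ B` the `K`-subalgebra
`ã_K` (the `K`-span of `ã`).  `J` is the Jacobson radical of `B` and `J_ã` the Jacobson
radical of `ã_K`, viewed inside `B`.  `V` plays the role of `M̃_K` and the lattice `M̃` is
an `A`-stable `O`-submodule `L ⊆ V`, finite and free over `O`, spanning `V` over `K`.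

STATEMENT: assume `J_ã·Ã_K = J = Ã_K·J_ã` and that `Ã` is tight as an `ã`-lattice, i.e.
`(ã ∩ J_ãⁿ)·Ã = Ã ∩ Jⁿ` for all `n ≥ 0`.  Then for every `Ã`-lattice `M̃` and every
`n ≥ 0` one has `M̃ ∩ J_ãⁿ·M̃_K = M̃ ∩ Jⁿ·M̃_K` and `(ã ∩ J_ãⁿ)·M̃ = (Ã ∩ Jⁿ)·M̃`;
consequently `M̃` is tight as an `ã`-lattice iff it is tight as an `Ã`-lattice.
-/

open Submodule

section

variable (O : Type) [CommRing O] [IsDomain O] [IsDiscreteValuationRing O]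
variable (K : Type) [Field K] [Algebra O K] [IsFractionRing O K]
variable (B : Type) [Ring B] [Algebra K B] [Algebra O B] [IsScalarTower O K B]
  [FiniteDimensional K B]
variable (V : Type) [AddCommGroup V] [Module K V] [Module B V] [IsScalarTower K B V]
  [Module O V] [IsScalarTower O K V] [FiniteDimensional K V]

section Aux
variable {R A V : Type} [CommSemiring R] [Semiring A] [Algebra R A]
  [AddCommMonoid V] [Module R V] [Module A V] [IsScalarTower R A V]

lemma sspan_mem {S : Set A} {W : Set V} {s : A} {w : V} (hs : s ∈ S) (hw : w ∈ W) :
    s • w ∈ sspan R S W :=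
  subset_span ⟨s, hs, w, hw, rfl⟩

lemma sspan_mono_left {S S' : Set A} (h : S ⊆ S') (W : Set V) :
    sspan R S W ≤ sspan R S' W :=
  span_mono (fun _ ⟨s, hs, w, hw, hy⟩ => ⟨s, h hs, w, hw, hy⟩)

lemma sspan_mono_right (S : Set A) {W W' : Set V} (h : W ⊆ W') :
    sspan R S W ≤ sspan R S W' :=
  span_mono (fun _ ⟨s, hs, w, hw, hy⟩ => ⟨s, hs, w, h hw, hy⟩)

lemma sspan_le {S : Set A} {W : Set V} {N : Submodule R V}
    (h : ∀ s ∈ S, ∀ w ∈ W, s • w ∈ N) : sspan R S W ≤ N := by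
  rw [sspan, span_le]
  rintro y ⟨s, hs, w, hw, rfl⟩
  exact h s hs w hw

lemma sspan_span_right (S : Set A) (W : Set V) :
    sspan R S ((Submodule.span R W : Submodule R V) : Set V) = sspan R S W := by
  refine le_antisymm (sspan_le fun s hs w hw => ?_)
    (sspan_mono_right _ subset_span)
  induction hw using span_induction with
  | mem x hx => exact sspan_mem hs hx
  | zero => rw [smul_zero]; exact zero_mem _
  | add x y hx hy ihx ihy => rw [smul_add]; exact add_mem ihx ihy
  | smul c x hx ih => rw [smul_comm]; exact smul_mem _ c ih

lemma sspan_assoc (S T : Set A) (W : Set V) :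
    sspan R ((sspan R S T : Submodule R A) : Set A) W
      = sspan R S ((sspan R T W : Submodule R V) : Set V) := by
  refine le_antisymm (sspan_le fun s hs w hw => ?_) (sspan_le fun s hs x hx => ?_)
  · induction hs using span_induction with
    | mem x hx =>
      obtain ⟨a, ha, t, ht, rfl⟩ := hx
      rw [smul_assoc]
      exact sspan_mem ha (sspan_mem ht hw)
    | zero => rw [zero_smul]; exact zero_mem _
    | add x y hx hy ihx ihy => rw [add_smul]; exact add_mem ihx ihy
    | smul c x hx ih => rw [smul_assoc]; exact smul_mem _ c ih
  · induction hx using span_induction with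
    | mem y hy =>
      obtain ⟨t, ht, w, hw, rfl⟩ := hy
      rw [← smul_assoc]
      exact sspan_mem (show s • t ∈ ((sspan R S T : Submodule R A) : Set A) from sspan_mem hs ht) hw
    | zero => rw [smul_zero]; exact zero_mem _
    | add x y hx hy ihx ihy => rw [smul_add]; exact add_mem ihx ihy
    | smul c x hx ih => rw [smul_comm]; exact smul_mem _ c ih

lemma mul_eq_sspan (M N : Submodule R A) :
    M * N = sspan R (M : Set A) (N : Set A) := by
  refine le_antisymm (Submodule.mul_le.2 fun m hm n hn => sspan_mem hm hn)
    (sspan_le fun s hs w hw => ?_)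
  exact Submodule.mul_mem_mul hs hw

end Aux

/-- The Jacobson radical `J_ã` of the subalgebra `C = ã_K`, viewed as a `K`-submodule
of `B`. -/
noncomputable def JaB (C : Subalgebra K B) : Submodule K B :=
  Submodule.map C.val.toLinearMap
    (Submodule.restrictScalars K (Ideal.jacobson (⊥ : Ideal ↥C)))

/-- `Jⁿ·M̃_K` for an arbitrary `K`-submodule `J ⊆ B` (applied to `J` and to `J_ã`). -/
noncomputable def powSMulV (Jsub : Submodule K B) (n : ℕ) : Submodule K V :=
  sspan K ((Jsub ^ n : Submodule K B) : Set B) (Set.univ : Set V)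

/-- `M̃ ∩ Jⁿ·M̃_K`. -/
noncomputable def radGen (Jsub : Submodule K B) (L : Submodule O V) (n : ℕ) : Submodule O V :=
  L ⊓ Submodule.restrictScalars O (powSMulV K B V Jsub n)

/-- `(D ∩ Jⁿ)`, for an `O`-submodule `D ⊆ B` and a `K`-submodule `J ⊆ B`. -/
noncomputable def FnGen (D : Submodule O B) (Jsub : Submodule K B) (n : ℕ) : Submodule O B :=
  D ⊓ Submodule.restrictScalars O (Jsub ^ n)

/-- `(D ∩ Jⁿ)·M̃`. -/
noncomputable def FnLGen (D : Submodule O B) (Jsub : Submodule K B) (L : Submodule O V)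
    (n : ℕ) : Submodule O V :=
  sspan O ((FnGen O K B D Jsub n : Submodule O B) : Set B) ((L : Submodule O V) : Set V)

theorem statement3
    (A : Subalgebra O B) (hAfin : Module.Finite O A) (hAfree : Module.Free O A)
    (hAspan : Submodule.span K (A : Set B) = ⊤)
    (A' : Subalgebra O B) (hsub : A' ≤ A)
    (hA'fin : Module.Finite O A') (hA'free : Module.Free O A')
    (C : Subalgebra K B) (hC : Subalgebra.toSubmodule C = Submodule.span K (A' : Set B))
    -- `J_ã·Ã_K = J = Ã_K·J_ã` :
    (hJa1 : JaB K B C * (⊤ : Submodule K B) = JK K B)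
    (hJa2 : (⊤ : Submodule K B) * JaB K B C = JK K B)
    -- `Ã` is tight as an `ã`-lattice: `(ã ∩ J_ãⁿ)·Ã = Ã ∩ Jⁿ` for all `n` :
    (htightA : ∀ n : ℕ,
      sspan O ((FnGen O K B A'.toSubmodule (JaB K B C) n : Submodule O B) : Set B)
          ((A.toSubmodule : Submodule O B) : Set B) =
        FnGen O K B A.toSubmodule (JK K B) n)
    -- the `Ã`-lattice `M̃` :
    (L : Submodule O V) (hLfin : Module.Finite O L) (hLfree : Module.Free O L)
    (hLspan : Submodule.span K (L : Set V) = ⊤)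
    (hLstab : ∀ a ∈ A, ∀ x ∈ L, a • x ∈ L) :
    -- `M̃ ∩ J_ãⁿ·M̃_K = M̃ ∩ Jⁿ·M̃_K` :
    (∀ n : ℕ, radGen O K B V (JaB K B C) L n = radGen O K B V (JK K B) L n) ∧
    -- `(ã ∩ J_ãⁿ)·M̃ = (Ã ∩ Jⁿ)·M̃` :
    (∀ n : ℕ,
      FnLGen O K B V A'.toSubmodule (JaB K B C) L n =
        FnLGen O K B V A.toSubmodule (JK K B) L n) ∧
    -- `M̃` is `ã`-tight iff it is `Ã`-tight :
    ((∀ n : ℕ,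
        FnLGen O K B V A'.toSubmodule (JaB K B C) L n = radGen O K B V (JaB K B C) L n) ↔
      (∀ n : ℕ,
        FnLGen O K B V A.toSubmodule (JK K B) L n = radGen O K B V (JK K B) L n)) := by
  haveI : IsScalarTower O B V :=
    ⟨fun c x w => by
      rw [← IsScalarTower.algebraMap_smul K c x, smul_assoc,
        IsScalarTower.algebraMap_smul K c (x • w)]⟩
  -- basic facts about ⊤ and the radicals
  have htop : (⊤ : Submodule K B) * (⊤ : Submodule K B) = ⊤ := by
    refine le_antisymm le_top fun x _ => ?_
    have := Submodule.mul_mem_mul (M := (⊤ : Submodule K B)) (N := (⊤ : Submodule K B))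
      (Submodule.mem_top (x := x)) (Submodule.mem_top (x := (1 : B)))
    rwa [mul_one] at this
  have hTopJ : (⊤ : Submodule K B) * JK K B = JK K B := by
    conv_lhs => rw [← hJa2]
    rw [← mul_assoc, htop, hJa2]
  have hJle : JaB K B C ≤ JK K B := by
    rw [← hJa1]
    intro x hx
    have := Submodule.mul_mem_mul hx (Submodule.mem_top (x := (1 : B)))
    rwa [mul_one] at this
  have hJpow : ∀ n : ℕ, (JaB K B C) ^ n ≤ (JK K B) ^ n := by
    intro n
    induction n with
    | zero => rw [pow_zero, pow_zero]
    | succ k ih =>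
      rw [pow_succ, pow_succ]
      exact mul_le_mul' ih hJle
  have hpow : ∀ m : ℕ, (JK K B) ^ (m + 1) = (JaB K B C) ^ (m + 1) * ⊤ := by
    intro m
    induction m with
    | zero => rw [pow_one, pow_one, hJa1]
    | succ k ih =>
      rw [pow_succ, ih, mul_assoc, hTopJ, ← hJa1, ← mul_assoc, ← pow_succ]
  -- `J_ãⁿ·M̃_K = Jⁿ·M̃_K`
  have hPS : ∀ n : ℕ, powSMulV K B V (JaB K B C) n = powSMulV K B V (JK K B) n := by
    intro n
    cases n with
    | zero => rw [powSMulV, powSMulV, pow_zero, pow_zero]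
    | succ m =>
      have h1 : sspan K ((⊤ : Submodule K B) : Set B) (Set.univ : Set V) = ⊤ := by
        refine le_antisymm le_top fun v _ => ?_
        have := sspan_mem (R := K) (Set.mem_univ (1 : B)) (Set.mem_univ v)
        rwa [one_smul] at this
      rw [powSMulV, powSMulV, hpow m, mul_eq_sspan, sspan_assoc, h1, Submodule.top_coe]
  have claim1 : ∀ n : ℕ, radGen O K B V (JaB K B C) L n = radGen O K B V (JK K B) L n := by
    intro n
    rw [radGen, radGen, hPS n]
  -- `(ã ∩ J_ãⁿ)·M̃ = (Ã ∩ Jⁿ)·M̃`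
  have hFn : ∀ n : ℕ, FnGen O K B (Subalgebra.toSubmodule A') (JaB K B C) n ≤
      FnGen O K B (Subalgebra.toSubmodule A) (JK K B) n := by
    intro n
    exact inf_le_inf (fun x hx => hsub hx) (fun x hx => hJpow n hx)
  have hAL : ((sspan O ((Subalgebra.toSubmodule A : Submodule O B) : Set B)
      ((L : Submodule O V) : Set V) : Submodule O V) : Set V) ⊆ (L : Set V) := by
    refine fun x hx => sspan_le (N := L) ?_ hx
    intro s hs w hw
    exact hLstab s hs w hw
  have claim2 : ∀ n : ℕ,
      FnLGen O K B V (Subalgebra.toSubmodule A') (JaB K B C) L n =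
        FnLGen O K B V (Subalgebra.toSubmodule A) (JK K B) L n := by
    intro n
    refine le_antisymm (sspan_mono_left (fun x hx => hFn n hx) _) ?_
    rw [FnLGen, FnLGen, ← htightA n, sspan_assoc]
    exact sspan_mono_right _ hAL
  refine ⟨claim1, claim2, ?_⟩
  constructor
  · intro h n
    rw [← claim2 n, h n, claim1 n]
  · intro h n
    rw [claim2 n, h n, ← claim1 n]


end
end
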